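/- arXiv:2106.04340 — 2 statements merged into one kernel-verified Lean document; each statement's English description precedes it below -/
import Mathlib

section
/- Suppose every model interpolant produced by a solver is drawn from a fixed finite set S of formulas. Then there is no infinite model interpolation sequence: any sequence of formulas (I_k) and models (M_k) such that each M_k satisfies ⋀_{i<k} I_i, each M_k falsifies A, and each I_k is implied by A and false in M_k, must be finite. -/
open Function

theorem injective_of_holds_later_of_fails_at_self {ι α : Type*} [LinearOrder ι]
    {I : ι → α → Prop} {M : ι → α}
    (hlater : ∀ k, ∀ i < k, I i (M k)) (hself : ∀ k, ¬ I k (M k)) : Injective I := by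
  intro i j hij
  by_contra hne
  rcases lt_or_gt_of_ne hne with hlt | hgt
  · exact hself j (hij ▸ hlater j i hlt)
  · exact hself i (hij ▸ hlater i j hgt)

theorem no_infinite_model_interpolation_sequence_general {Model : Type*}
    (A : Model → Prop) (S : Set (Model → Prop)) (hS : S.Finite)
    (I : ℕ → Model → Prop) (M : ℕ → Model)
    (hmem : ∀ k, I k ∈ S)
    (h1 : ∀ k, ∀ i < k, I i (M k))
    (h3 : ∀ k, (∀ N, A N → I k N) ∧ ¬ I k (M k)) :
    False := by
  have hinj : Injective I := injective_of_holds_later_of_fails_at_self h1 fun k => (h3 k).2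
  exact hS.not_infinite (Set.infinite_of_injective_forall_mem hinj hmem)

theorem no_infinite_model_interpolation_sequence {Model : Type*}
    (A : Model → Prop) (S : Set (Model → Prop)) (hS : S.Finite)
    (I : ℕ → Model → Prop) (M : ℕ → Model)
    (hmem : ∀ k, I k ∈ S)
    (h1 : ∀ k, ∀ i < k, I i (M k))
    (h2 : ∀ k, ¬ A (M k))
    (h3 : ∀ k, (∀ N, A N → I k N) ∧ ¬ I k (M k)) :
    False :=
  no_infinite_model_interpolation_sequence_general A S hS I M hmem h1 h3
end

section
/- Sign conditions on a univariate polynomial and all its derivatives determine the position relative to a root: let f : ℝ[X] have degree m, let α be a real root of f, and let β > α be a point with f(x) ≠ 0 for all x ∈ (α, ∞). If a real number x satisfies sgn(f^{(i)}(x)) = sgn(f^{(i)}(β)) for all 0 ≤ i < m, and f is monic, then x > α. -/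
/-!
Since `f` is monic with no root beyond `α`, `f β > 0`. Derivatives of order `≥ m` are constant, so
`x` and `β` agree in the signs of all derivatives of `f`; by Thom's lemma `f` then has constant sign
on `[x, β]`, which fails if `x ≤ α` because `f α = 0`.
-/

open Polynomial Set

namespace Real

theorem sign_eq_of_mem_uIcc {a b c : ℝ} (hab : sign a = sign b) (hc : c ∈ uIcc a b) :
    sign c = sign b := by
  rw [mem_uIcc] at hc
  simp only [sign] at hab ⊢
  split_ifs at hab ⊢ <;> grind

theorem nonneg_iff_of_sign_eq {a b : ℝ} (h : sign a = sign b) : 0 ≤ a ↔ 0 ≤ b := by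
  simp only [sign] at h
  split_ifs at h <;> grind

theorem nonpos_iff_of_sign_eq {a b : ℝ} (h : sign a = sign b) : a ≤ 0 ↔ b ≤ 0 := by
  simpa only [neg_nonneg] using nonneg_iff_of_sign_eq (a := -a) (b := -b) (by rw [sign_neg, sign_neg, h])

end Real

namespace Polynomial

theorem eval_iterate_derivative_eq_of_natDegree_le {R : Type*} [Semiring R] {f : R[X]} {i : ℕ}
    (hi : f.natDegree ≤ i) (x y : R) :
    (derivative^[i] f).eval x = (derivative^[i] f).eval y := by
  have : (derivative^[i] f).natDegree = 0 := by
    have := natDegree_iterate_derivative f i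
    omega
  rw [eq_C_of_natDegree_eq_zero this, eval_C, eval_C]

theorem eval_pos_of_forall_le_eval_ne_zero {f : ℝ[X]} (hdeg : 0 < f.degree)
    (hlc : 0 ≤ f.leadingCoeff) {β : ℝ} (hne : ∀ x, β ≤ x → f.eval x ≠ 0) : 0 < f.eval β := by
  by_contra! hβ
  obtain ⟨t, hft, hβt⟩ := ((tendsto_atTop_of_leadingCoeff_nonneg f hdeg hlc).eventually_ge_atTop 0
    |>.and (Filter.eventually_ge_atTop β)).exists
  obtain ⟨c, hc, hfc⟩ := isPreconnected_Ici.intermediate_value self_mem_Ici hβt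
    f.continuousOn ⟨hβ, hft⟩
  exact hne c hc hfc

/-- A polynomial whose derivative has constant sign on `[x, z]` is monotone or antitone there. -/
theorem eval_mem_uIcc_of_sign_eval_derivative_eq (f : ℝ[X]) {x y z : ℝ} (hy : y ∈ Icc x z)
    (hsign : ∀ t ∈ Icc x z, Real.sign (f.derivative.eval t) = Real.sign (f.derivative.eval z)) :
    f.eval y ∈ uIcc (f.eval x) (f.eval z) := by
  have hx : x ∈ Icc x z := ⟨le_rfl, hy.1.trans hy.2⟩
  have hz : z ∈ Icc x z := ⟨hy.1.trans hy.2, le_rfl⟩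
  rcases le_total 0 (f.derivative.eval z) with hf' | hf'
  · have hmono : MonotoneOn (fun t ↦ f.eval t) (Icc x z) :=
      monotoneOn_of_deriv_nonneg (convex_Icc x z) f.continuousOn f.differentiable.differentiableOn
        fun t ht ↦ by
          rw [Polynomial.deriv, Real.nonneg_iff_of_sign_eq (hsign t (interior_subset ht))]
          exact hf'
    exact Icc_subset_uIcc ⟨hmono hx hy hy.1, hmono hy hz hy.2⟩
  · have hanti : AntitoneOn (fun t ↦ f.eval t) (Icc x z) :=
      antitoneOn_of_deriv_nonpos (convex_Icc x z) f.continuousOn f.differentiable.differentiableOn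
        fun t ht ↦ by
          rw [Polynomial.deriv, Real.nonpos_iff_of_sign_eq (hsign t (interior_subset ht))]
          exact hf'
    exact Icc_subset_uIcc' ⟨hanti hy hz hy.2, hanti hx hy hy.1⟩

/-- Thom's lemma in one variable, by induction on the degree. -/
theorem sign_eval_eq_of_sign_eval_iterate_derivative_eq (f : ℝ[X]) {x z : ℝ}
    (hsign : ∀ i, Real.sign ((derivative^[i] f).eval x) = Real.sign ((derivative^[i] f).eval z))
    {y : ℝ} (hy : y ∈ Icc x z) : Real.sign (f.eval y) = Real.sign (f.eval z) := by
  induction hn : f.natDegree using Nat.strong_induction_on generalizing f y with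
  | _ n ih =>
    rcases eq_or_ne n 0 with rfl | hn0
    · rw [eq_C_of_natDegree_eq_zero hn, eval_C, eval_C]
    have hsign' : ∀ t ∈ Icc x z,
        Real.sign (f.derivative.eval t) = Real.sign (f.derivative.eval z) := fun t ht ↦
      ih _ (hn ▸ natDegree_derivative_lt (hn ▸ hn0)) f.derivative
        (fun i ↦ by simpa only [Function.iterate_succ_apply] using hsign (i + 1)) ht rfl
    exact Real.sign_eq_of_mem_uIcc (hsign 0) (eval_mem_uIcc_of_sign_eval_derivative_eq f hy hsign')

end Polynomial

theorem derivative_signs_determine_side_general {m : ℕ}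
    (f : Polynomial ℝ) (hmonic : f.Monic) (hdeg : f.natDegree = m)
    (α β : ℝ) (hroot : f.eval α = 0)
    (hnoroot : ∀ x, α < x → f.eval x ≠ 0)
    (hβ : α < β) :
    ∀ x : ℝ,
      (∀ i < m, Real.sign ((Polynomial.derivative^[i] f).eval x)
              = Real.sign ((Polynomial.derivative^[i] f).eval β)) →
      x > α := by
  intro x hx
  by_contra! hxα
  have hdeg_pos : 0 < f.degree :=
    hmonic.degree_pos.mpr fun h ↦ by simp [h] at hroot
  have hfβ : 0 < f.eval β :=
    eval_pos_of_forall_le_eval_ne_zero hdeg_pos (by simp [hmonic.leadingCoeff])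
      fun t ht ↦ hnoroot t (hβ.trans_le ht)
  have hsign : ∀ i, Real.sign ((derivative^[i] f).eval x)
      = Real.sign ((derivative^[i] f).eval β) := fun i ↦ by
    rcases lt_or_ge i m with hi | hi
    · exact hx i hi
    · rw [eval_iterate_derivative_eq_of_natDegree_le (hdeg.trans_le hi) x β]
  have hα := sign_eval_eq_of_sign_eval_iterate_derivative_eq f hsign ⟨hxα, hβ.le⟩
  rw [hroot, Real.sign_zero, Real.sign_of_pos hfβ] at hα
  exact zero_ne_one hα

theorem derivative_signs_determine_side {m : ℕ} (hm : 1 ≤ m)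
    (f : Polynomial ℝ) (hmonic : f.Monic) (hdeg : f.natDegree = m)
    (α β : ℝ) (hroot : f.eval α = 0)
    (hnoroot : ∀ x, α < x → f.eval x ≠ 0)
    (hβ : α < β) :
    ∀ x : ℝ,
      (∀ i < m, Real.sign ((Polynomial.derivative^[i] f).eval x)
              = Real.sign ((Polynomial.derivative^[i] f).eval β)) →
      x > α :=
  derivative_signs_determine_side_general f hmonic hdeg α β hroot hnoroot hβ
end
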